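/- arXiv:2002.01174 — 2 statements merged into one kernel-verified Lean document; each statement's English description precedes it below -/
import Mathlib

section
/- For every smooth field h : ℝ³ → Sym² of trace-free symmetric matrices, the field H h = (1/8) rot₂( rot₂(rot₂ h) + L(div₂ h) ) satisfies div₂( H h ) = 0 identically on ℝ³. -/
open MeasureTheory
open scoped BigOperators

/-- Partial derivative in the `i`-th coordinate direction on `ℝ³`. -/
noncomputable def pd (i : Fin 3) (f : (Fin 3 → ℝ) → ℝ) : (Fin 3 → ℝ) → ℝ :=
  fun x => fderiv ℝ f x (Pi.single i 1)

/-- The Levi-Civita symbol `ε_{ijk}` on three indices. -/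
def eps : Fin 3 → Fin 3 → Fin 3 → ℝ := fun i j k =>
  if (i, j, k) = ((0 : Fin 3), (1 : Fin 3), (2 : Fin 3)) ∨
     (i, j, k) = ((1 : Fin 3), (2 : Fin 3), (0 : Fin 3)) ∨
     (i, j, k) = ((2 : Fin 3), (0 : Fin 3), (1 : Fin 3)) then 1
  else if (i, j, k) = ((2 : Fin 3), (1 : Fin 3), (0 : Fin 3)) ∨
     (i, j, k) = ((1 : Fin 3), (0 : Fin 3), (2 : Fin 3)) ∨
     (i, j, k) = ((0 : Fin 3), (2 : Fin 3), (1 : Fin 3)) then -1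
  else 0

/-- The Kronecker delta `δ_{ij}`. -/
def kdelta (i j : Fin 3) : ℝ := if i = j then 1 else 0

/-- Scalar fields on `ℝ³`. -/
abbrev Fld := (Fin 3 → ℝ) → ℝ

/-- Vector fields on `ℝ³`, given by their components. -/
abbrev VecFld := Fin 3 → Fld

/-- (Symmetric-)matrix fields on `ℝ³`, given by their components. -/
abbrev MatFld := Fin 3 → Fin 3 → Fld

/-- `(rot₁ X)_i = Σ_{j,k} ε_{ijk} ∂_j X_k`. -/
noncomputable def rot1 (X : VecFld) : VecFld := fun i x => ∑ j, ∑ k, eps i j k * pd j (X k) x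

/-- `div₁ X = Σ_i ∂_i X_i`. -/
noncomputable def div1 (X : VecFld) : Fld := fun x => ∑ i, pd i (X i) x

/-- `(div₂ h)_i = Σ_j ∂_j h_{ij}`. -/
noncomputable def div2 (h : MatFld) : VecFld := fun i x => ∑ j, pd j (h i j) x

/-- `(rot₂ h)_{ij} = Σ_{k,ℓ} ( ε_{kℓi} ∂_k h_{ℓj} + ε_{kℓj} ∂_k h_{ℓi} )`. -/
noncomputable def rot2 (h : MatFld) : MatFld :=
  fun i j x => ∑ k, ∑ l, (eps k l i * pd k (h l j) x + eps k l j * pd k (h l i) x)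

/-- The conformal Killing operator
`(L X)_{ij} = ∂_i X_j + ∂_j X_i − (2/3) δ_{ij} Σ_k ∂_k X_k`. -/
noncomputable def Lop (X : VecFld) : MatFld :=
  fun i j x => pd i (X j) x + pd j (X i) x - (2/3) * kdelta i j * div1 X x

/-- The flat-space linearised Cotton operator on trace-free fields:
`H h = (1/8) rot₂( rot₂(rot₂ h) + L(div₂ h) )`. -/
noncomputable def Hop (h : MatFld) : MatFld := fun i j x =>
  (1/8) * rot2 (fun a b y => rot2 (rot2 h) a b y + Lop (div2 h) a b y) i j x


section Stmt6Aux
lemma eps_000 : eps 0 0 0 = 0 := rfl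
lemma eps_001 : eps 0 0 1 = 0 := rfl
lemma eps_002 : eps 0 0 2 = 0 := rfl
lemma eps_010 : eps 0 1 0 = 0 := rfl
lemma eps_011 : eps 0 1 1 = 0 := rfl
lemma eps_012 : eps 0 1 2 = 1 := rfl
lemma eps_020 : eps 0 2 0 = 0 := rfl
lemma eps_021 : eps 0 2 1 = -1 := rfl
lemma eps_022 : eps 0 2 2 = 0 := rfl
lemma eps_100 : eps 1 0 0 = 0 := rfl
lemma eps_101 : eps 1 0 1 = 0 := rfl
lemma eps_102 : eps 1 0 2 = -1 := rfl
lemma eps_110 : eps 1 1 0 = 0 := rfl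
lemma eps_111 : eps 1 1 1 = 0 := rfl
lemma eps_112 : eps 1 1 2 = 0 := rfl
lemma eps_120 : eps 1 2 0 = 1 := rfl
lemma eps_121 : eps 1 2 1 = 0 := rfl
lemma eps_122 : eps 1 2 2 = 0 := rfl
lemma eps_200 : eps 2 0 0 = 0 := rfl
lemma eps_201 : eps 2 0 1 = 1 := rfl
lemma eps_202 : eps 2 0 2 = 0 := rfl
lemma eps_210 : eps 2 1 0 = -1 := rfl
lemma eps_211 : eps 2 1 1 = 0 := rfl
lemma eps_212 : eps 2 1 2 = 0 := rfl
lemma eps_220 : eps 2 2 0 = 0 := rfl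
lemma eps_221 : eps 2 2 1 = 0 := rfl
lemma eps_222 : eps 2 2 2 = 0 := rfl
lemma kdelta_00 : kdelta 0 0 = 1 := rfl
lemma kdelta_01 : kdelta 0 1 = 0 := rfl
lemma kdelta_02 : kdelta 0 2 = 0 := rfl
lemma kdelta_10 : kdelta 1 0 = 0 := rfl
lemma kdelta_11 : kdelta 1 1 = 1 := rfl
lemma kdelta_12 : kdelta 1 2 = 0 := rfl
lemma kdelta_20 : kdelta 2 0 = 0 := rfl
lemma kdelta_21 : kdelta 2 1 = 0 := rfl
lemma kdelta_22 : kdelta 2 2 = 1 := rfl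

lemma sm_pd {f : Fld} (hf : ContDiff ℝ (⊤ : ℕ∞) f) (i : Fin 3) : ContDiff ℝ (⊤ : ℕ∞) (pd i f) :=
  (hf.fderiv_right (by simp)).clm_apply contDiff_const

lemma diff_of_sm {f : Fld} (hf : ContDiff ℝ (⊤ : ℕ∞) f) (x : Fin 3 → ℝ) : DifferentiableAt ℝ f x :=
  (hf.differentiable (by simp)) x

lemma pd_add {f g : Fld} (hf : ContDiff ℝ (⊤ : ℕ∞) f) (hg : ContDiff ℝ (⊤ : ℕ∞) g) (i : Fin 3) (x : Fin 3 → ℝ) :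
    pd i (fun y => f y + g y) x = pd i f x + pd i g x := by
  unfold pd; rw [fderiv_fun_add (diff_of_sm hf x) (diff_of_sm hg x)]; rfl

lemma pd_sub {f g : Fld} (hf : ContDiff ℝ (⊤ : ℕ∞) f) (hg : ContDiff ℝ (⊤ : ℕ∞) g) (i : Fin 3) (x : Fin 3 → ℝ) :
    pd i (fun y => f y - g y) x = pd i f x - pd i g x := by
  unfold pd; rw [fderiv_fun_sub (diff_of_sm hf x) (diff_of_sm hg x)]; rfl

lemma pd_cmul {f : Fld} (hf : ContDiff ℝ (⊤ : ℕ∞) f) (c : ℝ) (i : Fin 3) (x : Fin 3 → ℝ) :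
    pd i (fun y => c * f y) x = c * pd i f x := by
  unfold pd; rw [fderiv_const_mul (diff_of_sm hf x) c]; rfl

lemma pd_sum {f : Fin 3 → Fld} (hf : ∀ k, ContDiff ℝ (⊤ : ℕ∞) (f k)) (i : Fin 3) (x : Fin 3 → ℝ) :
    pd i (fun y => ∑ k, f k y) x = ∑ k, pd i (f k) x := by
  unfold pd
  rw [fderiv_fun_sum (fun k _ => diff_of_sm (hf k) x)]
  simp

theorem pd_comm {f : Fld} (hf : ContDiff ℝ (⊤ : ℕ∞) f) (i j : Fin 3) (x : Fin 3 → ℝ) :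
    pd i (pd j f) x = pd j (pd i f) x := by
  have hsymm : IsSymmSndFDerivAt ℝ f x := by
    apply ContDiffAt.isSymmSndFDerivAt (n := ((⊤ : ℕ∞) : WithTop ℕ∞)) (hf.contDiffAt.of_le (by simp))
    · rw [show ((2:WithTop ℕ∞)) = (((2:ℕ∞)) : WithTop ℕ∞) by norm_cast]
      simp only [minSmoothness_of_isRCLikeNormedField]
      exact WithTop.coe_le_coe.mpr le_top
  have key : ∀ a b : Fin 3,
      pd a (pd b f) x = fderiv ℝ (fderiv ℝ f) x (Pi.single a 1) (Pi.single b 1) := by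
    intro a b
    have hdf : DifferentiableAt ℝ (fderiv ℝ f) x :=
      ((hf.fderiv_right (m := 1) (by exact WithTop.coe_le_coe.mpr le_top)).differentiable one_ne_zero) x
    unfold pd
    rw [fderiv_clm_apply hdf (differentiableAt_const _)]
    simp
  rw [key, key]
  exact hsymm (Pi.single i 1) (Pi.single j 1)

lemma sm_div1 {X : VecFld} (hX : ∀ k, ContDiff ℝ (⊤ : ℕ∞) (X k)) : ContDiff ℝ (⊤ : ℕ∞) (div1 X) :=
  ContDiff.sum fun k _ => sm_pd (hX k) k

lemma sm_div2 {g : MatFld} (hg : ∀ a b, ContDiff ℝ (⊤ : ℕ∞) (g a b)) (i : Fin 3) :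
    ContDiff ℝ (⊤ : ℕ∞) (div2 g i) :=
  ContDiff.sum fun j _ => sm_pd (hg i j) j

lemma sm_rot2 {g : MatFld} (hg : ∀ a b, ContDiff ℝ (⊤ : ℕ∞) (g a b)) (i j : Fin 3) :
    ContDiff ℝ (⊤ : ℕ∞) (rot2 g i j) :=
  ContDiff.sum fun k _ => ContDiff.sum fun l _ =>
    (contDiff_const.mul (sm_pd (hg l j) k)).add (contDiff_const.mul (sm_pd (hg l i) k))

lemma sm_Lop {X : VecFld} (hX : ∀ k, ContDiff ℝ (⊤ : ℕ∞) (X k)) (i j : Fin 3) :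
    ContDiff ℝ (⊤ : ℕ∞) (Lop X i j) :=
  ((sm_pd (hX j) i).add (sm_pd (hX i) j)).sub (contDiff_const.mul (sm_div1 hX))

lemma pd_div2 {g : MatFld} (hg : ∀ a b, ContDiff ℝ (⊤ : ℕ∞) (g a b)) (m i : Fin 3) (x : Fin 3 → ℝ) :
    pd m (div2 g i) x = ∑ j, pd m (pd j (g i j)) x :=
  pd_sum (f := fun j => pd j (g i j)) (fun j => sm_pd (hg i j) j) m x

lemma pd_div1 {X : VecFld} (hX : ∀ k, ContDiff ℝ (⊤ : ℕ∞) (X k)) (m : Fin 3) (x : Fin 3 → ℝ) :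
    pd m (div1 X) x = ∑ k, pd m (pd k (X k)) x :=
  pd_sum (f := fun k => pd k (X k)) (fun k => sm_pd (hX k) k) m x

lemma pd_rot1 {X : VecFld} (hX : ∀ k, ContDiff ℝ (⊤ : ℕ∞) (X k)) (m b : Fin 3) (x : Fin 3 → ℝ) :
    pd m (rot1 X b) x = ∑ c, ∑ d, eps b c d * pd m (pd c (X d)) x := by
  calc pd m (rot1 X b) x
      = ∑ c, pd m (fun y => ∑ d, eps b c d * pd c (X d) y) x :=
        pd_sum (f := fun c y => ∑ d, eps b c d * pd c (X d) y)
          (fun c => ContDiff.sum fun d _ => contDiff_const.mul (sm_pd (hX d) c)) m x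
    _ = ∑ c, ∑ d, pd m (fun y => eps b c d * pd c (X d) y) x :=
        Finset.sum_congr rfl fun c _ =>
          pd_sum (f := fun d y => eps b c d * pd c (X d) y)
            (fun d => contDiff_const.mul (sm_pd (hX d) c)) m x
    _ = ∑ c, ∑ d, eps b c d * pd m (pd c (X d)) x :=
        Finset.sum_congr rfl fun c _ => Finset.sum_congr rfl fun d _ =>
          pd_cmul (sm_pd (hX d) c) (eps b c d) m x

lemma pd_rot2 {g : MatFld} (hg : ∀ a b, ContDiff ℝ (⊤ : ℕ∞) (g a b)) (m i j : Fin 3) (x : Fin 3 → ℝ) :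
    pd m (rot2 g i j) x
      = ∑ k, ∑ l, (eps k l i * pd m (pd k (g l j)) x + eps k l j * pd m (pd k (g l i)) x) := by
  calc pd m (rot2 g i j) x
      = ∑ k, pd m (fun y => ∑ l, (eps k l i * pd k (g l j) y + eps k l j * pd k (g l i) y)) x :=
        pd_sum (f := fun k y => ∑ l, (eps k l i * pd k (g l j) y + eps k l j * pd k (g l i) y))
          (fun k => ContDiff.sum fun l _ =>
            (contDiff_const.mul (sm_pd (hg l j) k)).add (contDiff_const.mul (sm_pd (hg l i) k))) m x
    _ = ∑ k, ∑ l, pd m (fun y => eps k l i * pd k (g l j) y + eps k l j * pd k (g l i) y) x :=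
        Finset.sum_congr rfl fun k _ =>
          pd_sum (f := fun l y => eps k l i * pd k (g l j) y + eps k l j * pd k (g l i) y)
            (fun l => (contDiff_const.mul (sm_pd (hg l j) k)).add
              (contDiff_const.mul (sm_pd (hg l i) k))) m x
    _ = ∑ k, ∑ l, (eps k l i * pd m (pd k (g l j)) x + eps k l j * pd m (pd k (g l i)) x) := by
        refine Finset.sum_congr rfl fun k _ => Finset.sum_congr rfl fun l _ => ?_
        rw [pd_add (f := fun y => eps k l i * pd k (g l j) y) (g := fun y => eps k l j * pd k (g l i) y)
          (contDiff_const.mul (sm_pd (hg l j) k)) (contDiff_const.mul (sm_pd (hg l i) k)) m x,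
          pd_cmul (sm_pd (hg l j) k) _ m x, pd_cmul (sm_pd (hg l i) k) _ m x]

lemma pd_Lop {X : VecFld} (hX : ∀ k, ContDiff ℝ (⊤ : ℕ∞) (X k)) (m i j : Fin 3) (x : Fin 3 → ℝ) :
    pd m (Lop X i j) x
      = pd m (pd i (X j)) x + pd m (pd j (X i)) x
        - (2/3) * kdelta i j * ∑ k, pd m (pd k (X k)) x := by
  calc pd m (Lop X i j) x
      = pd m (fun y => pd i (X j) y + pd j (X i) y) x
          - pd m (fun y => (2/3) * kdelta i j * div1 X y) x :=
        pd_sub (f := fun y => pd i (X j) y + pd j (X i) y)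
          (g := fun y => (2/3) * kdelta i j * div1 X y)
          ((sm_pd (hX j) i).add (sm_pd (hX i) j))
          ((contDiff_const.mul contDiff_const).mul (sm_div1 hX)) m x
    _ = (pd m (pd i (X j)) x + pd m (pd j (X i)) x)
          - (2/3) * kdelta i j * pd m (div1 X) x := by
        rw [pd_add (sm_pd (hX j) i) (sm_pd (hX i) j) m x,
          pd_cmul (f := div1 X) (sm_div1 hX) ((2/3) * kdelta i j) m x]
    _ = pd m (pd i (X j)) x + pd m (pd j (X i)) x
          - (2/3) * kdelta i j * ∑ k, pd m (pd k (X k)) x := by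
        rw [pd_div1 hX m x]

/-- `div₂ ∘ rot₂ = rot₁ ∘ div₂`. -/
lemma div2_rot2 {g : MatFld} (hg : ∀ a b, ContDiff ℝ (⊤ : ℕ∞) (g a b)) (i : Fin 3) (x : Fin 3 → ℝ) :
    div2 (rot2 g) i x = rot1 (div2 g) i x := by
  have hL : div2 (rot2 g) i x
      = ∑ j : Fin 3, ∑ k : Fin 3, ∑ l : Fin 3,
          (eps k l i * pd j (pd k (g l j)) x + eps k l j * pd j (pd k (g l i)) x) :=
    Finset.sum_congr rfl fun j _ => pd_rot2 hg j i j x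
  have hR : rot1 (div2 g) i x
      = ∑ j : Fin 3, ∑ k : Fin 3, eps i j k * ∑ m : Fin 3, pd j (pd m (g k m)) x := by
    refine Finset.sum_congr rfl fun j _ => Finset.sum_congr rfl fun k _ => ?_
    rw [pd_div2 hg j k x]
  rw [hL, hR]
  fin_cases i <;>
  · simp only [Fin.zero_eta, Fin.mk_one, Fin.reduceFinMk, Fin.sum_univ_three]
    simp only [eps_000, eps_001, eps_002, eps_010, eps_011, eps_012, eps_020, eps_021, eps_022, eps_100, eps_101, eps_102, eps_110, eps_111, eps_112, eps_120, eps_121, eps_122, eps_200, eps_201, eps_202, eps_210, eps_211, eps_212, eps_220, eps_221, eps_222, kdelta_00, kdelta_01, kdelta_02, kdelta_10, kdelta_11, kdelta_12, kdelta_20, kdelta_21, kdelta_22]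
    norm_num
    linarith [pd_comm (hg 0 0) 0 1 x, pd_comm (hg 0 0) 0 2 x, pd_comm (hg 0 0) 1 2 x, pd_comm (hg 0 1) 0 1 x, pd_comm (hg 0 1) 0 2 x, pd_comm (hg 0 1) 1 2 x, pd_comm (hg 0 2) 0 1 x, pd_comm (hg 0 2) 0 2 x, pd_comm (hg 0 2) 1 2 x, pd_comm (hg 1 0) 0 1 x, pd_comm (hg 1 0) 0 2 x, pd_comm (hg 1 0) 1 2 x, pd_comm (hg 1 1) 0 1 x, pd_comm (hg 1 1) 0 2 x, pd_comm (hg 1 1) 1 2 x, pd_comm (hg 1 2) 0 1 x, pd_comm (hg 1 2) 0 2 x, pd_comm (hg 1 2) 1 2 x, pd_comm (hg 2 0) 0 1 x, pd_comm (hg 2 0) 0 2 x, pd_comm (hg 2 0) 1 2 x, pd_comm (hg 2 1) 0 1 x, pd_comm (hg 2 1) 0 2 x, pd_comm (hg 2 1) 1 2 x, pd_comm (hg 2 2) 0 1 x, pd_comm (hg 2 2) 0 2 x, pd_comm (hg 2 2) 1 2 x]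

/-- The key vector-field identity: `rot₁ rot₁ X + div₂ L X = (4/3) ∇ (div₁ X)`. -/
lemma keyBC {X : VecFld} (hX : ∀ k, ContDiff ℝ (⊤ : ℕ∞) (X k)) (k : Fin 3) (x : Fin 3 → ℝ) :
    rot1 (rot1 X) k x + div2 (Lop X) k x = (4/3) * pd k (div1 X) x := by
  have h1 : rot1 (rot1 X) k x
      = ∑ a : Fin 3, ∑ b : Fin 3, eps k a b * ∑ c : Fin 3, ∑ d : Fin 3,
          eps b c d * pd a (pd c (X d)) x := by
    refine Finset.sum_congr rfl fun a _ => Finset.sum_congr rfl fun b _ => ?_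
    rw [pd_rot1 hX a b x]
  have h2 : div2 (Lop X) k x
      = ∑ j : Fin 3, (pd j (pd k (X j)) x + pd j (pd j (X k)) x
          - (2/3) * kdelta k j * ∑ m : Fin 3, pd j (pd m (X m)) x) :=
    Finset.sum_congr rfl fun j _ => pd_Lop hX j k j x
  have h3 : pd k (div1 X) x = ∑ m : Fin 3, pd k (pd m (X m)) x := pd_div1 hX k x
  rw [h1, h2, h3]
  fin_cases k <;>
  · simp only [Fin.zero_eta, Fin.mk_one, Fin.reduceFinMk, Fin.sum_univ_three]
    simp only [eps_000, eps_001, eps_002, eps_010, eps_011, eps_012, eps_020, eps_021, eps_022, eps_100, eps_101, eps_102, eps_110, eps_111, eps_112, eps_120, eps_121, eps_122, eps_200, eps_201, eps_202, eps_210, eps_211, eps_212, eps_220, eps_221, eps_222, kdelta_00, kdelta_01, kdelta_02, kdelta_10, kdelta_11, kdelta_12, kdelta_20, kdelta_21, kdelta_22]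
    norm_num
    linarith [pd_comm (hX 0) 0 1 x, pd_comm (hX 0) 0 2 x, pd_comm (hX 0) 1 2 x, pd_comm (hX 1) 0 1 x, pd_comm (hX 1) 0 2 x, pd_comm (hX 1) 1 2 x, pd_comm (hX 2) 0 1 x, pd_comm (hX 2) 0 2 x, pd_comm (hX 2) 1 2 x]

end Stmt6Aux

/-- `div₂( H h ) = 0` for every smooth trace-free symmetric field `h`. -/
theorem stmt6 (h : MatFld)
    (hh_smooth : ∀ i j, ContDiff ℝ (⊤ : ℕ∞) (h i j))
    (hh_symm : ∀ i j, h i j = h j i)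
    (hh_tracefree : ∀ x, ∑ i, h i i x = 0) :
    ∀ (i : Fin 3) (x : Fin 3 → ℝ), div2 (Hop h) i x = 0 := by
  intro i x
  have hX : ∀ k, ContDiff ℝ (⊤ : ℕ∞) (div2 h k) := fun k => sm_div2 hh_smooth k
  have hrr : ∀ a b, ContDiff ℝ (⊤ : ℕ∞) (rot2 (rot2 h) a b) :=
    fun a b => sm_rot2 (fun c d => sm_rot2 hh_smooth c d) a b
  set G : MatFld := fun a b y => rot2 (rot2 h) a b y + Lop (div2 h) a b y with hGdef
  have hG : ∀ a b, ContDiff ℝ (⊤ : ℕ∞) (G a b) := fun a b => (hrr a b).add (sm_Lop hX a b)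
  have step1 : div2 (Hop h) i x = (1/8) * rot1 (div2 G) i x := by
    calc div2 (Hop h) i x = ∑ j, pd j (Hop h i j) x := rfl
      _ = ∑ j, (1/8) * pd j (rot2 G i j) x :=
          Finset.sum_congr rfl fun j _ =>
            pd_cmul (f := rot2 G i j) (sm_rot2 hG i j) (1/8) j x
      _ = (1/8) * ∑ j, pd j (rot2 G i j) x := by rw [Finset.mul_sum]
      _ = (1/8) * div2 (rot2 G) i x := rfl
      _ = (1/8) * rot1 (div2 G) i x := by rw [div2_rot2 hG i x]
  have step2 : div2 G = fun k y => (4/3) * pd k (div1 (div2 h)) y := by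
    funext k y
    have e1 : div2 G k y = div2 (rot2 (rot2 h)) k y + div2 (Lop (div2 h)) k y :=
      (Finset.sum_congr rfl fun j _ =>
        pd_add (f := rot2 (rot2 h) k j) (g := Lop (div2 h) k j)
          (hrr k j) (sm_Lop hX k j) j y).trans Finset.sum_add_distrib
    have e2 : div2 (rot2 (rot2 h)) k y = rot1 (div2 (rot2 h)) k y :=
      div2_rot2 (fun a b => sm_rot2 hh_smooth a b) k y
    have e3 : div2 (rot2 h) = rot1 (div2 h) :=
      funext fun b => funext fun z => div2_rot2 hh_smooth b z
    rw [e1, e2, e3]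
    exact keyBC hX k y
  rw [step1, step2]
  have hphi : ContDiff ℝ (⊤ : ℕ∞) (div1 (div2 h)) := sm_div1 hX
  have final : rot1 (fun k y => (4/3) * pd k (div1 (div2 h)) y) i x = 0 := by
    have e : rot1 (fun k y => (4/3) * pd k (div1 (div2 h)) y) i x
        = ∑ j : Fin 3, ∑ k : Fin 3, eps i j k * ((4/3) * pd j (pd k (div1 (div2 h))) x) :=
      Finset.sum_congr rfl fun j _ => Finset.sum_congr rfl fun k _ => by
        rw [pd_cmul (sm_pd hphi k) (4/3) j x]
    rw [e]
    fin_cases i <;>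
    · simp only [Fin.zero_eta, Fin.mk_one, Fin.reduceFinMk, Fin.sum_univ_three]
      simp only [eps_000, eps_001, eps_002, eps_010, eps_011, eps_012, eps_020, eps_021, eps_022, eps_100, eps_101, eps_102, eps_110, eps_111, eps_112, eps_120, eps_121, eps_122, eps_200, eps_201, eps_202, eps_210, eps_211, eps_212, eps_220, eps_221, eps_222]
      norm_num
      linarith [pd_comm hphi 0 1 x, pd_comm hphi 0 2 x, pd_comm hphi 1 2 x]
  rw [final, mul_zero]
end

section
/- Let k ∈ ℝ³ be nonzero and let t be a trace-free real symmetric 3×3 matrix with Σ_{i,j} k_i k_j t_{ij} = 0. Then there exists a trace-free real symmetric 3×3 matrix φ with σ_k(rot₂)(φ) = t. Conversely, for every trace-free symmetric φ the matrix σ_k(rot₂)(φ) is trace-free symmetric and satisfies Σ_{i,j} k_i k_j (σ_k(rot₂)(φ))_{ij} = 0. (Exactness of the symbol sequence of the Hamiltonian complex at the slot S₀² → div₁div₂.) -/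
open scoped BigOperators

/-- The cross product on `ℝ³`: `(a × b)_i = Σ_{j,l} ε_{ijl} a_j b_l`. -/
def cross (a b : Fin 3 → ℝ) : Fin 3 → ℝ := fun i => ∑ j, ∑ l, eps i j l * a j * b l

/-- The symbol of `rot₂`:
`(σ_k(rot₂)(h))_{ij} = Σ_{ℓ,m} ( ε_{iℓm} k_ℓ h_{mj} + ε_{jℓm} k_ℓ h_{mi} )`. -/
def sigRot2 (k : Fin 3 → ℝ) (h : Fin 3 → Fin 3 → ℝ) : Fin 3 → Fin 3 → ℝ :=
  fun i j => ∑ l, ∑ m, (eps i l m * k l * h m j + eps j l m * k l * h m i)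

/-!
Let `K` be the matrix of `v ↦ k × v`, `Q = k kᵀ` and `N = |k|²`. On symmetric matrices
`σ_k(rot₂)` is the commutator `h ↦ ⁅K, h⁆`, and `K k = 0 = kᵀ K` gives the easy direction.
For the converse, `K² = Q - N` and the sandwich identity for `K t K` show that on symmetric
trace-free `t` with `kᵀ t k = 0`, writing `S = Q t + t Q`,
`⁅K, ⁅K, t⁆⁆ = 3 S - 4 N t` and `⁅K, ⁅K, S⁆⁆ = -N S`
(`S / N` and `t - S / N` are the parts of `t` on which `ad_K²` acts by `-N` and `-4N`).
Hence `φ = -(4N²)⁻¹ ⁅K, N t + 3 S⁆` solves `⁅K, φ⁆ = t`.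
-/

open Matrix

attribute [local instance] LieRing.ofAssociativeRing

section CrossMatrix

variable {R : Type*} [CommRing R] (k : Fin 3 → R)

/-- `crossMatrix k *ᵥ v = k ⨯₃ v`. -/
def crossMatrix : Matrix (Fin 3) (Fin 3) R :=
  !![0, -k 2, k 1; k 2, 0, -k 0; -k 1, k 0, 0]

lemma crossMatrix_transpose : (crossMatrix k)ᵀ = -crossMatrix k := by
  ext i j; fin_cases i <;> fin_cases j <;> simp [crossMatrix]

lemma crossMatrix_mulVec_self : crossMatrix k *ᵥ k = 0 := by
  ext i; fin_cases i <;> simp [crossMatrix, mulVec, dotProduct, Fin.sum_univ_three] <;> ring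

lemma vecMul_crossMatrix_self : k ᵥ* crossMatrix k = 0 := by
  ext i; fin_cases i <;> simp [crossMatrix, vecMul, dotProduct, Fin.sum_univ_three] <;> ring

lemma crossMatrix_mul_vecMulVec_self : crossMatrix k * vecMulVec k k = 0 := by
  rw [mul_vecMulVec, crossMatrix_mulVec_self, zero_vecMulVec]

lemma vecMulVec_self_mul_crossMatrix : vecMulVec k k * crossMatrix k = 0 := by
  rw [vecMulVec_mul, vecMul_crossMatrix_self, vecMulVec_zero]

lemma vecMulVec_self_mul_self : vecMulVec k k * vecMulVec k k = (k ⬝ᵥ k) • vecMulVec k k := by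
  rw [vecMulVec_mul_vecMulVec, vecMulVec_smul]

lemma vecMulVec_self_mul_mul_self (t : Matrix (Fin 3) (Fin 3) R) :
    vecMulVec k k * t * vecMulVec k k = (k ⬝ᵥ t *ᵥ k) • vecMulVec k k := by
  rw [vecMulVec_mul, vecMulVec_mul_vecMulVec, vecMulVec_smul, dotProduct_mulVec]

lemma crossMatrix_mul_self :
    crossMatrix k * crossMatrix k = vecMulVec k k - (k ⬝ᵥ k) • 1 := by
  ext i j; fin_cases i <;> fin_cases j <;>
    simp [crossMatrix, mul_apply, vecMulVec_apply, dotProduct, Fin.sum_univ_three] <;> ring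

lemma crossMatrix_mul_mul_crossMatrix {t : Matrix (Fin 3) (Fin 3) R} (ht : t.IsSymm) :
    crossMatrix k * t * crossMatrix k = (k ⬝ᵥ k) • t - vecMulVec k k * t - t * vecMulVec k k
      + (k ⬝ᵥ t *ᵥ k) • 1 + t.trace • (vecMulVec k k - (k ⬝ᵥ k) • 1) := by
  have h10 := ht.apply 1 0
  have h20 := ht.apply 2 0
  have h21 := ht.apply 2 1
  ext i j; fin_cases i <;> fin_cases j <;>
    simp [crossMatrix, mul_apply, vecMulVec_apply, dotProduct, mulVec, vecMul, trace,
      Fin.sum_univ_three, h10, h20, h21] <;> ring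

lemma isSymm_crossMatrix_lie {X : Matrix (Fin 3) (Fin 3) R} (hX : X.IsSymm) :
    ⁅crossMatrix k, X⁆.IsSymm := by
  rw [IsSymm, Ring.lie_def, transpose_sub, transpose_mul, transpose_mul, crossMatrix_transpose,
    hX.eq, Matrix.mul_neg, Matrix.neg_mul, sub_neg_eq_add, neg_add_eq_sub]

lemma dotProduct_crossMatrix_lie_mulVec_self (X : Matrix (Fin 3) (Fin 3) R) :
    k ⬝ᵥ ⁅crossMatrix k, X⁆ *ᵥ k = 0 := by
  rw [Ring.lie_def, sub_mulVec, ← mulVec_mulVec, ← mulVec_mulVec, crossMatrix_mulVec_self,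
    mulVec_zero, sub_zero, dotProduct_mulVec, vecMul_crossMatrix_self, zero_dotProduct]

lemma lie_lie_eq {A : Type*} [Ring A] (a x : A) :
    ⁅a, ⁅a, x⁆⁆ = a * a * x - 2 • (a * x * a) + x * (a * a) := by
  simp only [Ring.lie_def]; noncomm_ring

lemma crossMatrix_lie_lie {t : Matrix (Fin 3) (Fin 3) R} (ht : t.IsSymm) (htr : t.trace = 0)
    (hkk : k ⬝ᵥ t *ᵥ k = 0) :
    ⁅crossMatrix k, ⁅crossMatrix k, t⁆⁆ =
      (3 : R) • (vecMulVec k k * t + t * vecMulVec k k) - (4 * (k ⬝ᵥ k)) • t := by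
  rw [lie_lie_eq, crossMatrix_mul_self, crossMatrix_mul_mul_crossMatrix k ht, htr, hkk]
  simp only [Matrix.mul_sub, Matrix.sub_mul, Matrix.smul_mul, Matrix.mul_smul, Matrix.one_mul,
    Matrix.mul_one, zero_smul, add_zero]
  module

lemma crossMatrix_lie_lie_vecMulVec_mul_add {t : Matrix (Fin 3) (Fin 3) R}
    (hkk : k ⬝ᵥ t *ᵥ k = 0) :
    ⁅crossMatrix k, ⁅crossMatrix k, vecMulVec k k * t + t * vecMulVec k k⁆⁆ =
      -(k ⬝ᵥ k) • (vecMulVec k k * t + t * vecMulVec k k) := by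
  have hQK (A) : A * vecMulVec k k * crossMatrix k = 0 := by
    rw [Matrix.mul_assoc, vecMulVec_self_mul_crossMatrix, Matrix.mul_zero]
  have hQQ (A) : A * vecMulVec k k * vecMulVec k k = (k ⬝ᵥ k) • (A * vecMulVec k k) := by
    rw [Matrix.mul_assoc, vecMulVec_self_mul_self, Matrix.mul_smul]
  rw [lie_lie_eq, crossMatrix_mul_self]
  simp only [Matrix.mul_add, Matrix.add_mul, Matrix.mul_sub, Matrix.sub_mul, ← Matrix.mul_assoc,
    crossMatrix_mul_vecMulVec_self, hQK, hQQ, vecMulVec_self_mul_self,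
    vecMulVec_self_mul_mul_self, hkk, Matrix.zero_mul, Matrix.smul_mul, Matrix.mul_smul,
    Matrix.one_mul, Matrix.mul_one, zero_smul]
  module

end CrossMatrix

lemma Matrix.trace_lie {R n : Type*} [CommRing R] [Fintype n] (A B : Matrix n n R) :
    ⁅A, B⁆.trace = 0 := by
  rw [Ring.lie_def, trace_sub, trace_mul_comm, sub_self]

theorem exists_isSymm_trace_eq_zero_crossMatrix_lie_eq {F : Type*} [Field F] {k : Fin 3 → F}
    (hN : k ⬝ᵥ k ≠ 0) (h2 : (2 : F) ≠ 0) {t : Matrix (Fin 3) (Fin 3) F} (ht : t.IsSymm)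
    (htr : t.trace = 0) (hkk : k ⬝ᵥ t *ᵥ k = 0) :
    ∃ φ : Matrix (Fin 3) (Fin 3) F, φ.IsSymm ∧ φ.trace = 0 ∧ ⁅crossMatrix k, φ⁆ = t := by
  set S := vecMulVec k k * t + t * vecMulVec k k
  have hS : S.IsSymm := by
    rw [IsSymm, transpose_add, transpose_mul, transpose_mul, transpose_vecMulVec, ht.eq, add_comm]
  refine ⟨-(4 * (k ⬝ᵥ k) ^ 2)⁻¹ • ⁅crossMatrix k, (k ⬝ᵥ k) • t + (3 : F) • S⁆,
    ((isSymm_crossMatrix_lie k ((ht.smul _).add (hS.smul _))).smul _),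
    by rw [trace_smul, trace_lie, smul_zero], ?_⟩
  simp only [lie_smul, lie_add]
  rw [crossMatrix_lie_lie k ht htr hkk, crossMatrix_lie_lie_vecMulVec_mul_add k hkk]
  have h4 : (4 : F) ≠ 0 := by rw [show (4 : F) = 2 * 2 by norm_num]; exact mul_ne_zero h2 h2
  match_scalars <;> field_simp <;> ring

lemma sigRot2_eq (k : Fin 3 → ℝ) (h : Matrix (Fin 3) (Fin 3) ℝ) :
    sigRot2 k h = crossMatrix k * h + (crossMatrix k * h)ᵀ := by
  ext i j; fin_cases i <;> fin_cases j <;>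
    simp [sigRot2, eps, crossMatrix, vecMul, dotProduct, Fin.sum_univ_three] <;> ring

lemma sigRot2_eq_crossMatrix_lie (k : Fin 3 → ℝ) {h : Matrix (Fin 3) (Fin 3) ℝ} (hh : h.IsSymm) :
    sigRot2 k h = ⁅crossMatrix k, h⁆ := by
  rw [sigRot2_eq, transpose_mul, crossMatrix_transpose, hh.eq, Matrix.mul_neg, Ring.lie_def,
    sub_eq_add_neg]

lemma sum_sum_mul_mul_eq_dotProduct_mulVec {R : Type*} [CommRing R] (k : Fin 3 → R)
    (t : Matrix (Fin 3) (Fin 3) R) : ∑ i, ∑ j, k i * k j * t i j = k ⬝ᵥ t *ᵥ k := by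
  simp only [dotProduct, mulVec, Finset.mul_sum]
  exact Finset.sum_congr rfl fun i _ => Finset.sum_congr rfl fun j _ => by ring

/-- exactness of the symbol sequence of the Hamiltonian complex at the
slot `S₀² → div₁div₂`: for `k ≠ 0`, every trace-free symmetric `t` with
`Σ_{i,j} k_i k_j t_{ij} = 0` is `σ_k(rot₂)(φ)` for some trace-free symmetric `φ`;
conversely every `σ_k(rot₂)(φ)` is trace-free symmetric with vanishing `k k`-contraction. -/
theorem stmt13 (k : Fin 3 → ℝ) (hk : k ≠ 0) :
    (∀ t : Fin 3 → Fin 3 → ℝ, (∀ i j, t i j = t j i) → (∑ i, t i i) = 0 →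
      (∑ i, ∑ j, k i * k j * t i j) = 0 →
      ∃ φ : Fin 3 → Fin 3 → ℝ, (∀ i j, φ i j = φ j i) ∧ (∑ i, φ i i) = 0 ∧
        ∀ i j, sigRot2 k φ i j = t i j) ∧
    (∀ φ : Fin 3 → Fin 3 → ℝ, (∀ i j, φ i j = φ j i) → (∑ i, φ i i) = 0 →
      (∀ i j, sigRot2 k φ i j = sigRot2 k φ j i) ∧ (∑ i, sigRot2 k φ i i) = 0 ∧
        (∑ i, ∑ j, k i * k j * sigRot2 k φ i j) = 0) := by
  have hN : k ⬝ᵥ k ≠ 0 := dotProduct_self_eq_zero.not.mpr hk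
  refine ⟨fun t ht htr hkk => ?_, fun φ hφ _ => ?_⟩
  · have hkk' : k ⬝ᵥ of t *ᵥ k = 0 := by rw [← sum_sum_mul_mul_eq_dotProduct_mulVec]; exact hkk
    obtain ⟨φ, hφ, hφtr, hφt⟩ := exists_isSymm_trace_eq_zero_crossMatrix_lie_eq hN two_ne_zero
      (IsSymm.ext fun i j => ht j i) htr hkk'
    exact ⟨φ, fun i j => hφ.apply j i, hφtr,
      fun i j => by rw [sigRot2_eq_crossMatrix_lie k hφ, hφt]⟩
  · have hφ' : (of φ).IsSymm := IsSymm.ext fun i j => hφ j i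
    have hσ : sigRot2 k φ = ⁅crossMatrix k, of φ⁆ := sigRot2_eq_crossMatrix_lie k hφ'
    rw [hσ, sum_sum_mul_mul_eq_dotProduct_mulVec]
    exact ⟨fun i j => (isSymm_crossMatrix_lie k hφ').apply j i, trace_lie _ _,
      dotProduct_crossMatrix_lie_mulVec_self k _⟩
end
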